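/- arXiv:2402.17606 — 4 statements merged into one kernel-verified Lean document; each statement's English description precedes it below -/
import Mathlib

section
/- In a finite directed acyclic graph, for every vertex x, after applying the message-passing operator L_x times the message of x equals 1, i.e., m L_x x = 1, where L_x is the maximum length of a directed path from a source to x. (First part of Theorem 1 on the MPTS operator.) -/
/-- A directed path from `u` to `v` of length `k`. -/
def IsPath {V : Type*} (E : V → V → Prop) (u v : V) (k : ℕ) : Prop :=
  ∃ f : ℕ → V, f 0 = u ∧ f k = v ∧ ∀ i < k, E (f i) (f (i + 1))

/-- Acyclicity: there is no nonempty directed path from any vertex to itself. -/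
def Acyclic {V : Type*} (E : V → V → Prop) : Prop :=
  ∀ (v : V) (k : ℕ), 1 ≤ k → ¬ IsPath E v v k

/-- A source: a vertex with no in-neighbors. -/
def IsSource {V : Type*} (E : V → V → Prop) (v : V) : Prop :=
  ∀ u, ¬ E u v

/-- The MPTS message recursion: `m 0 x = 1` for sources and `0` otherwise;
`m (t+1) x = m t x` for sources, and for non-sources `m (t+1) x` is the maximum
over in-neighbors `y` of `m t y`. -/
def IsMsg {V : Type*} (E : V → V → Prop) (m : ℕ → V → ℕ) : Prop :=
  (∀ x, IsSource E x → m 0 x = 1) ∧ (∀ x, ¬ IsSource E x → m 0 x = 0) ∧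
  (∀ t x, IsSource E x → m (t + 1) x = m t x) ∧
  (∀ t x, ¬ IsSource E x →
    (∃ y, E y x ∧ m (t + 1) x = m t y) ∧ ∀ y, E y x → m t y ≤ m (t + 1) x)

/-- `L x` is the maximum length of a directed path from a source to `x`:
some source-to-`x` path has length `L x`, and every such path has length `≤ L x`. -/
def IsMaxSourcePathLen {V : Type*} (E : V → V → Prop) (L : V → ℕ) : Prop :=
  ∀ x, (∃ s, IsSource E s ∧ IsPath E s x (L x)) ∧
    ∀ s k, IsSource E s → IsPath E s x k → k ≤ L x

/-- In a finite DAG, after applying the message-passing operator `L x` times,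
the message of `x` equals `1`: `m (L x) x = 1`. -/
theorem msg_eq_one_after_Lx {V : Type*} [Fintype V] (E : V → V → Prop)
    (hacyc : Acyclic E) (m : ℕ → V → ℕ) (hm : IsMsg E m)
    (L : V → ℕ) (hL : IsMaxSourcePathLen E L) :
    ∀ x, m (L x) x = 1 := by
  obtain ⟨h0s, h0n, hts, htn⟩ := hm
  have hsrc : ∀ t x, IsSource E x → m t x = 1 := by
    intro t
    induction t with
    | zero => exact fun x hx => h0s x hx
    | succ t ih => intro x hx; rw [hts t x hx]; exact ih x hx
  have hle : ∀ t x, m t x ≤ 1 := by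
    intro t
    induction t with
    | zero =>
      intro x
      by_cases hx : IsSource E x
      · rw [h0s x hx]
      · rw [h0n x hx]; omega
    | succ t ih =>
      intro x
      by_cases hx : IsSource E x
      · rw [hts t x hx]; exact ih x
      · obtain ⟨⟨y, _, hEq⟩, _⟩ := htn t x hx
        rw [hEq]; exact ih y
  have hLn : ∀ x y, E y x → L y + 1 ≤ L x := by
    intro x y hE
    obtain ⟨s, hs, f, hf0, hfk, hfe⟩ := (hL y).1
    have hp : IsPath E s x (L y + 1) := by
      refine ⟨fun i => if i < L y + 1 then f i else x, ?_, ?_, ?_⟩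
      · simp [hf0]
      · simp
      · intro i hi
        rcases Nat.lt_or_ge i (L y) with h | h
        · simp only [if_pos (by omega : i < L y + 1), if_pos (by omega : i + 1 < L y + 1)]
          exact hfe i h
        · have hiL : i = L y := by omega
          subst hiL
          simp [hfk, hE]
    exact (hL x).2 s (L y + 1) hs hp
  have hex : ∀ x, ¬ IsSource E x → ∃ y, E y x := by
    intro x hx
    by_contra h
    push_neg at h
    exact hx h
  have main : ∀ t x, L x ≤ t → m t x = 1 := by
    intro t
    induction t with
    | zero =>
      intro x hx
      by_cases h : IsSource E x
      · exact h0s x h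
      · obtain ⟨y, hy⟩ := hex x h
        have := hLn x y hy
        omega
    | succ t ih =>
      intro x hx
      by_cases h : IsSource E x
      · exact hsrc _ x h
      · obtain ⟨y, hy⟩ := hex x h
        have h1 : L y ≤ t := by have := hLn x y hy; omega
        have h2 : m t y = 1 := ih y h1
        have h3 := (htn t x h).2 y hy
        have h4 := hle (t + 1) x
        omega
  exact fun x => main (L x) x le_rfl
end

section
/- In a finite directed acyclic graph, for every t ∈ ℕ and every vertex x, the message m t x equals 1 if and only if there exists a directed path of length at most t from a source to x. (Characterization of the messages produced by the MPTS operator, which underlies the correctness of the topological-sort computation in Theorem 1.) -/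
/-- In a finite DAG, `m t x = 1` iff there is a directed path of length at most `t`
from a source to `x`. -/
theorem msg_eq_one_iff {V : Type*} [Fintype V] (E : V → V → Prop)
    (hacyc : Acyclic E) (m : ℕ → V → ℕ) (hm : IsMsg E m) :
    ∀ (t : ℕ) (x : V),
      m t x = 1 ↔ ∃ (s : V) (k : ℕ), IsSource E s ∧ k ≤ t ∧ IsPath E s x k := by
  obtain ⟨h1, h2, h3, h4⟩ := hm
  have hb : ∀ t x, m t x ≤ 1 := by
    intro t
    induction t with
    | zero =>
      intro x
      by_cases h : IsSource E x
      · rw [h1 x h]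
      · rw [h2 x h]; omega
    | succ t ih =>
      intro x
      by_cases h : IsSource E x
      · rw [h3 t x h]; exact ih x
      · obtain ⟨⟨y, hy, hxy⟩, _⟩ := h4 t x h
        rw [hxy]; exact ih y
  intro t
  induction t with
  | zero =>
    intro x
    constructor
    · intro hx
      by_cases h : IsSource E x
      · exact ⟨x, 0, h, le_refl 0, ⟨fun _ => x, rfl, rfl, by omega⟩⟩
      · rw [h2 x h] at hx; omega
    · rintro ⟨s, k, hs, hk, f, hf0, hfk, hfe⟩
      have hk0 : k = 0 := Nat.le_zero.mp hk
      subst hk0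
      have hsx : s = x := hf0.symm.trans hfk
      exact h1 x (hsx ▸ hs)
  | succ t ih =>
    intro x
    by_cases h : IsSource E x
    · rw [h3 t x h, ih x]
      constructor
      · rintro ⟨s, k, hs, hk, hp⟩
        exact ⟨s, k, hs, by omega, hp⟩
      · rintro ⟨s, k, hs, hk, f, hf0, hfk, hfe⟩
        have hk0 : k = 0 := by
          by_contra hne
          have he : E (f (k - 1)) (f ((k - 1) + 1)) := hfe (k - 1) (by omega)
          rw [Nat.sub_add_cancel (by omega), hfk] at he
          exact h _ he
        subst hk0
        exact ⟨s, 0, hs, Nat.zero_le t, f, hf0, hfk, by omega⟩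
    · obtain ⟨⟨y0, hy0, hxy0⟩, hmax⟩ := h4 t x h
      constructor
      · intro hx
        have hy1 : m t y0 = 1 := by rw [← hxy0]; exact hx
        obtain ⟨s, k, hs, hk, f, hf0, hfk, hfe⟩ := (ih y0).mp hy1
        refine ⟨s, k + 1, hs, by omega, fun i => if i = k + 1 then x else f i, ?_, ?_, ?_⟩
        · simp [hf0]
        · simp
        · intro i hi
          by_cases hik : i = k
          · subst hik
            simp [hfk, hy0]
          · have hlt : i < k := by omega
            have h1' : i ≠ k + 1 := by omega
            have h2' : i + 1 ≠ k + 1 := by omega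
            simp only [h1', h2', if_false]
            exact hfe i hlt
      · rintro ⟨s, k, hs, hk, f, hf0, hfk, hfe⟩
        have hk1 : 1 ≤ k := by
          rcases Nat.eq_zero_or_pos k with h0 | hp
          · subst h0
            exact absurd ((hf0.symm.trans hfk) ▸ hs) h
          · exact hp
        have hy : E (f (k - 1)) x := by
          have he := hfe (k - 1) (by omega)
          rwa [Nat.sub_add_cancel hk1, hfk] at he
        have hm1 : m t (f (k - 1)) = 1 :=
          (ih _).mpr ⟨s, k - 1, hs, by omega, f, hf0, rfl, fun i hi => hfe i (by omega)⟩
        have h5 := hmax _ hy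
        have h6 := hb (t + 1) x
        omega
end

section
/- In a finite directed acyclic graph, let L denote the maximum of L_x over all vertices x (the length of a globally longest source-rooted path). Then after L applications of the message-passing operator all messages equal 1: m L x = 1 for every vertex x. Consequently m t x = 1 for every t ≥ L and every x. (Termination of the MPTS computation after at most L iterations.) -/
/-- In a finite nonempty DAG, after `Finset.univ.sup L` (the length of a globally
longest source-rooted path) applications of the message-passing operator all
messages equal `1`, and they stay equal to `1` at all later times. -/
theorem msg_all_one_after_global_L {V : Type*} [Fintype V] [Nonempty V]
    (E : V → V → Prop) (hacyc : Acyclic E)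
    (m : ℕ → V → ℕ) (hm : IsMsg E m)
    (L : V → ℕ) (hL : IsMaxSourcePathLen E L) :
    (∀ x, m (Finset.univ.sup L) x = 1) ∧
    (∀ (t : ℕ) (x : V), Finset.univ.sup L ≤ t → m t x = 1) := by
  obtain ⟨h0s, h0n, hss, hsn⟩ := hm
  -- messages are always ≤ 1
  have hle : ∀ t x, m t x ≤ 1 := by
    intro t
    induction t with
    | zero =>
      intro x
      by_cases h : IsSource E x
      · rw [h0s x h]
      · rw [h0n x h]; omega
    | succ t ih =>
      intro x
      by_cases h : IsSource E x
      · rw [hss t x h]; exact ih x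
      · obtain ⟨y, _, hy⟩ := (hsn t x h).1
        rw [hy]; exact ih y
  -- sources are always 1
  have hsrc : ∀ x, IsSource E x → ∀ t, m t x = 1 := by
    intro x hx t
    induction t with
    | zero => exact h0s x hx
    | succ t ih => rw [hss t x hx]; exact ih
  -- in-neighbors have strictly smaller L
  have hpred : ∀ x y, E y x → L y + 1 ≤ L x := by
    intro x y hxy
    obtain ⟨⟨s, hs, f, hf0, hfk, hfe⟩, _⟩ := hL y
    refine (hL x).2 s (L y + 1) hs ⟨fun i => if i = L y + 1 then x else f i, ?_, ?_, ?_⟩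
    · simp [hf0]
    · simp
    · intro i hi
      have hi' : i ≠ L y + 1 := by omega
      rcases lt_or_eq_of_le (Nat.lt_succ_iff.mp hi) with h | h
      · have : i + 1 ≠ L y + 1 := by omega
        simp only [hi', this, if_false]
        exact hfe i h
      · subst h
        simp [hi', hfk, hxy]
  -- main induction
  have key : ∀ n x t, L x ≤ n → L x ≤ t → m t x = 1 := by
    intro n
    induction n with
    | zero =>
      intro x t hn _
      by_cases h : IsSource E x
      · exact hsrc x h t
      · exfalso
        obtain ⟨⟨s, hs, f, hf0, hfk, _⟩, _⟩ := hL x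
        have hx0 : L x = 0 := Nat.le_zero.mp hn
        apply h
        rw [hx0] at hfk
        rw [← hfk, hf0]
        exact hs
    | succ n ih =>
      intro x t hn ht
      by_cases h : IsSource E x
      · exact hsrc x h t
      · have hex : ∃ y, E y x := by
          by_contra hc
          push_neg at hc
          exact h hc
        obtain ⟨y0, hy0⟩ := hex
        have hx1 : 1 ≤ L x := by have := hpred x y0 hy0; omega
        obtain ⟨t', rfl⟩ : ∃ t', t = t' + 1 := ⟨t - 1, by omega⟩
        have hall : ∀ y, E y x → m t' y = 1 := by
          intro y hy
          have := hpred x y hy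
          exact ih y t' (by omega) (by omega)
        have := (hsn t' x h).2 y0 hy0
        rw [hall y0 hy0] at this
        exact le_antisymm (hle _ x) this
  refine ⟨fun x => key (Finset.univ.sup L) x _ (Finset.le_sup (Finset.mem_univ x)) (Finset.le_sup (Finset.mem_univ x)),
    fun t x ht => key (Finset.univ.sup L) x t (Finset.le_sup (Finset.mem_univ x))
      (le_trans (Finset.le_sup (Finset.mem_univ x)) ht)⟩
end

section
/- In a finite directed acyclic graph with node weights p : V → ℝ (p ≥ 0), any earliest-starting-time function EST satisfies, for every vertex x: EST(x) equals the maximum over all directed paths v_0, v_1, …, v_k = x starting at a source v_0 and ending at x of the sum Σ_{i<k} p(v_i) of the weights of all vertices on the path except x itself (the empty path giving 0 for sources). In particular, the earliest starting time of a sink vertex equals the total weight of a heaviest (critical) source-to-sink path, which is the makespan of the schedule. -/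
lemma transGen_isPath {V : Type*} {E : V → V → Prop} {u v : V}
    (h : Relation.TransGen E u v) : ∃ k, 1 ≤ k ∧ IsPath E u v k := by
  induction h with
  | @single b he =>
    refine ⟨1, le_refl _, fun i => if i = 0 then u else b, by simp, by simp, ?_⟩
    intro i hi
    interval_cases i
    simpa using he
  | @tail b c _ he ih =>
    obtain ⟨k, hk, f, hf0, hfk, hedge⟩ := ih
    refine ⟨k + 1, by omega, fun i => if i ≤ k then f i else c, by simp [hf0], by simp, ?_⟩
    intro i hi
    rcases lt_or_eq_of_le (Nat.lt_succ_iff.mp hi) with h' | h'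
    · simp only [le_of_lt h', if_pos, Nat.succ_le_of_lt h']
      simpa [le_of_lt h', Nat.succ_le_of_lt h'] using hedge i h'
    · subst h'
      simpa [hfk] using he

lemma wf_of_acyclic {V : Type*} [Fintype V] {E : V → V → Prop}
    (hacyc : Acyclic E) : WellFounded E := by
  have hirr : ∀ v, ¬ Relation.TransGen E v v := by
    intro v hv
    obtain ⟨k, hk, hpath⟩ := transGen_isPath hv
    exact hacyc v k hk hpath
  have : IsIrrefl V (Relation.TransGen E) := ⟨hirr⟩
  have : IsTrans V (Relation.TransGen E) := ⟨fun _ _ _ => Relation.TransGen.trans⟩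
  have hwf : WellFounded (Relation.TransGen E) :=
    Finite.wellFounded_of_trans_of_irrefl _
  exact Subrelation.wf (fun h => Relation.TransGen.single h) hwf

/-- In a finite DAG with nonnegative node weights, any earliest-starting-time
function `EST` satisfies: `EST x` is the maximum, over all directed paths
`f 0, f 1, …, f k = x` starting at a source `f 0` and ending at `x`, of the
weight sum `∑ i < k, p (f i)` of all vertices on the path except `x` itself
(the empty path giving `0` for sources). -/
theorem EST_eq_max_path_weight {V : Type*} [Fintype V] (E : V → V → Prop)
    (hacyc : Acyclic E) (p : V → ℝ) (hp : ∀ v, 0 ≤ p v) (EST : V → ℝ)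
    (hsource : ∀ v, IsSource E v → EST v = 0)
    (hmax : ∀ v, ¬ IsSource E v →
      (∃ u, E u v ∧ EST v = EST u + p u) ∧ ∀ u, E u v → EST u + p u ≤ EST v) :
    ∀ x : V,
      (∃ (k : ℕ) (f : ℕ → V), IsSource E (f 0) ∧ f k = x ∧
        (∀ i < k, E (f i) (f (i + 1))) ∧ EST x = ∑ i ∈ Finset.range k, p (f i)) ∧
      (∀ (k : ℕ) (f : ℕ → V), IsSource E (f 0) → f k = x →
        (∀ i < k, E (f i) (f (i + 1))) → ∑ i ∈ Finset.range k, p (f i) ≤ EST x) := by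
  intro x
  induction x using (wf_of_acyclic hacyc).induction with
  | _ x ih =>
  by_cases hs : IsSource E x
  · constructor
    · exact ⟨0, fun _ => x, hs, rfl, by omega, by simp [hsource x hs]⟩
    · intro k f hf0 hfk hedge
      rcases Nat.eq_zero_or_pos k with hk | hk
      · subst hk; simp [hsource x hs]
      · exfalso
        have : E (f (k - 1)) (f (k - 1 + 1)) := hedge _ (by omega)
        rw [show k - 1 + 1 = k by omega, hfk] at this
        exact hs _ this
  · obtain ⟨⟨u, hux, hEST⟩, hbound⟩ := hmax x hs
    constructor
    · obtain ⟨⟨k, f, hf0, hfk, hedge, hsum⟩, _⟩ := ih u hux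
      refine ⟨k + 1, fun i => if i ≤ k then f i else x, by simpa using hf0, by simp, ?_, ?_⟩
      · intro i hi
        rcases lt_or_eq_of_le (Nat.lt_succ_iff.mp hi) with h' | h'
        · simp only [le_of_lt h', if_pos, Nat.succ_le_of_lt h']
          simpa [le_of_lt h', Nat.succ_le_of_lt h'] using hedge i h'
        · subst h'
          simpa [hfk] using hux
      · rw [Finset.sum_range_succ]
        have : ∀ i ∈ Finset.range k, p (if i ≤ k then f i else x) = p (f i) := by
          intro i hi
          simp [le_of_lt (Finset.mem_range.mp hi)]
        rw [Finset.sum_congr rfl this]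
        simp [hfk, hEST, hsum]
    · intro k f hf0 hfk hedge
      rcases Nat.eq_zero_or_pos k with hk | hk
      · exfalso; subst hk; rw [hfk] at hf0; exact hs hf0
      · obtain ⟨m, rfl⟩ : ∃ m, k = m + 1 := ⟨k - 1, by omega⟩
        have hem : E (f m) x := by rw [← hfk]; exact hedge m (by omega)
        have ihm := (ih (f m) hem).2 m f hf0 rfl (fun i hi => hedge i (by omega))
        rw [Finset.sum_range_succ]
        calc ∑ i ∈ Finset.range m, p (f i) + p (f m)
            ≤ EST (f m) + p (f m) := by linarith
          _ ≤ EST x := hbound _ hem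
end
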